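/- arXiv:1411.3754 — 5 statements merged into one kernel-verified Lean document; each statement's English description precedes it below -/
import Mathlib

section
/- Let ρ be a density matrix and H a Hermitian matrix on ℂⁿ. Let p↑ be the eigenvalues of ρ in non-decreasing order and λ↓ the eigenvalues of H in non-increasing order. Then there exists a Hermitian H* that is unitarily equivalent to H, commutes with ρ, and satisfies Tr(ρ H*) = Σᵢ p↑ᵢ λ↓ᵢ ≤ Tr(ρ U H U†) for every unitary U. In particular, the minimum of Tr(ρ H') over the unitary orbit of H is achieved by a Hamiltonian diagonal in an eigenbasis of ρ with eigenvalues anti-ordered relative to those of ρ. -/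
open Matrix BigOperators ComplexOrder

variable {n : Type*} [Fintype n] [DecidableEq n]

/-- Real part of the trace. -/
noncomputable def trR {m : Type*} [Fintype m] (A : Matrix m m ℂ) : ℝ := (Matrix.trace A).re

/-- The matrix `exp (-β H)`. -/
noncomputable def mexp {m : Type*} [Fintype m] [DecidableEq m] (β : ℝ) (H : Matrix m m ℂ) :
    Matrix m m ℂ := NormedSpace.exp ((-β : ℂ) • H)

/-- The Gibbs state `exp (-β H) / Tr (exp (-β H))`. -/
noncomputable def gibbs {m : Type*} [Fintype m] [DecidableEq m] (β : ℝ) (H : Matrix m m ℂ) :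
    Matrix m m ℂ := (Matrix.trace (mexp β H))⁻¹ • mexp β H

/-- Von Neumann entropy `-Tr (ρ log ρ)`, via the eigenvalues of a Hermitian matrix. -/
noncomputable def vnEntropy {m : Type*} [Fintype m] [DecidableEq m] {ρ : Matrix m m ℂ}
    (h : ρ.IsHermitian) : ℝ := -∑ i, h.eigenvalues i * Real.log (h.eigenvalues i)

/-- Free energy `F(ρ,H) = Tr(ρH) - S(ρ)/β`. -/
noncomputable def freeEnergy {m : Type*} [Fintype m] [DecidableEq m] (β : ℝ)
    (ρ H : Matrix m m ℂ) (h : ρ.IsHermitian) : ℝ := trR (ρ * H) - vnEntropy h / β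

/-- Matrix logarithm of a Hermitian matrix, via the spectral decomposition. -/
noncomputable def mlog {m : Type*} [Fintype m] [DecidableEq m] {A : Matrix m m ℂ}
    (h : A.IsHermitian) : Matrix m m ℂ :=
  (h.eigenvectorUnitary : Matrix m m ℂ) *
    Matrix.diagonal (fun i => (Real.log (h.eigenvalues i) : ℂ)) *
      (star (h.eigenvectorUnitary : Matrix m m ℂ))

/-- Quantum relative entropy `D(ρ‖σ) = Tr(ρ log ρ) - Tr(ρ log σ)`. -/
noncomputable def relEnt {m : Type*} [Fintype m] [DecidableEq m] {ρ σ : Matrix m m ℂ}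
    (hρ : ρ.IsHermitian) (hσ : σ.IsHermitian) : ℝ :=
  trR (ρ * mlog hρ) - trR (ρ * mlog hσ)


/-!
Diagonalise `ρ = V diag(p) V†` and `H = W diag(λ) W†` with the eigenvalues in the given orders.
For a unitary `U`, `Tr(ρ U H U†) = ∑ᵢⱼ |Nᵢⱼ|² pᵢ λⱼ` with `N = V† U W`, and the matrix `(|Nᵢⱼ|²)`
is doubly stochastic. By Birkhoff's theorem this linear functional attains its minimum over doubly
stochastic matrices at a permutation matrix, where the rearrangement inequality gives
`∑ᵢ pᵢ λ_σ(i) ≥ ∑ᵢ pᵢ λᵢ`. The bound is attained by `H* = V diag(λ) V†`, which commutes with `ρ`.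
-/

namespace Matrix

variable {ι 𝕜 : Type*} [Fintype ι] [DecidableEq ι] [RCLike 𝕜]

theorem sum_mul_le_dotProduct_mulVec_of_mem_doublyStochastic {p lam : ι → ℝ}
    (hpl : Antivary p lam) {D : Matrix ι ι ℝ} (hD : D ∈ doublyStochastic ℝ ι) :
    ∑ i, p i * lam i ≤ p ⬝ᵥ (D *ᵥ lam) := by
  let f : Matrix ι ι ℝ →ₗ[ℝ] ℝ :=
    { toFun := fun D => p ⬝ᵥ (D *ᵥ lam)
      map_add' := fun _ _ => by simp [add_mulVec]
      map_smul' := fun _ _ => by simp [smul_mulVec] }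
  rw [SetLike.mem_coe.symm, doublyStochastic_eq_convexHull_permMatrix] at hD
  obtain ⟨_, ⟨σ, rfl⟩, hσ⟩ :=
    (f.concaveOn convex_univ).exists_le_of_mem_convexHull (Set.subset_univ _) hD
  refine le_trans ?_ hσ
  simpa [f, permMatrix_mulVec, dotProduct] using hpl.sum_mul_le_sum_mul_comp_perm (σ := σ)

theorem norm_sq_mem_doublyStochastic_of_mem_unitaryGroup {U : Matrix ι ι 𝕜}
    (hU : U ∈ unitaryGroup ι 𝕜) : (of fun i j => ‖U i j‖ ^ 2) ∈ doublyStochastic ℝ ι := by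
  refine mem_doublyStochastic_iff_sum.2 ⟨fun _ _ => sq_nonneg _, fun i => ?_, fun j => ?_⟩
  · have h := congr_fun₂ (mem_unitaryGroup_iff.1 hU) i i
    simp only [mul_apply, star_apply, RCLike.star_def, RCLike.mul_conj, one_apply_eq] at h
    exact_mod_cast h
  · have h := congr_fun₂ (mem_unitaryGroup_iff'.1 hU) j j
    simp only [mul_apply, star_apply, RCLike.star_def, RCLike.conj_mul, one_apply_eq] at h
    exact_mod_cast h

theorem re_trace_diagonal_mul_conj_diagonal (a b : ι → ℝ) (N : Matrix ι ι 𝕜) :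
    RCLike.re (trace (diagonal (RCLike.ofReal ∘ a) *
        (N * diagonal (RCLike.ofReal ∘ b) * star N))) =
      a ⬝ᵥ ((of fun i j => ‖N i j‖ ^ 2) *ᵥ b) := by
  rw [trace, map_sum]
  refine Finset.sum_congr rfl fun i _ => ?_
  rw [diag_apply, diagonal_mul, mul_apply, Finset.mul_sum, map_sum, mulVec, dotProduct,
    Finset.mul_sum]
  refine Finset.sum_congr rfl fun j _ => ?_
  rw [mul_diagonal, star_apply, RCLike.star_def, of_apply, mul_right_comm _ _ (starRingEnd 𝕜 _),
    RCLike.mul_conj, Function.comp_apply, Function.comp_apply]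
  norm_cast

theorem re_trace_conj_diagonal_mul_conj_diagonal (V M : Matrix ι ι 𝕜) (p lam : ι → ℝ) :
    RCLike.re (trace (V * diagonal (RCLike.ofReal ∘ p) * star V *
        (M * diagonal (RCLike.ofReal ∘ lam) * star M))) =
      p ⬝ᵥ ((of fun i j => ‖(star V * M) i j‖ ^ 2) *ᵥ lam) := by
  rw [← re_trace_diagonal_mul_conj_diagonal, star_mul, star_star]
  simp only [Matrix.mul_assoc]
  rw [trace_mul_comm V]
  simp only [Matrix.mul_assoc]

theorem IsHermitian.exists_unitary_eq_conj_diagonal {A : Matrix ι ι 𝕜}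
    (hA : A.IsHermitian) {d : ι → ℝ} (hd : ∃ e : Equiv.Perm ι, d = hA.eigenvalues ∘ e) :
    ∃ V ∈ unitaryGroup ι 𝕜, A = V * diagonal (RCLike.ofReal ∘ d) * star V := by
  obtain ⟨e, rfl⟩ := hd
  set W : Matrix ι ι 𝕜 := ↑hA.eigenvectorUnitary
  have hW : W * star W = 1 := mem_unitaryGroup_iff.1 hA.eigenvectorUnitary.2
  refine ⟨W.submatrix id e, mem_unitaryGroup_iff.2 ?_, ?_⟩
  · rw [star_eq_conjTranspose, conjTranspose_submatrix, submatrix_mul_equiv,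
      ← star_eq_conjTranspose, hW, submatrix_id_id]
  · rw [← Function.comp_assoc, star_eq_conjTranspose, conjTranspose_submatrix,
      ← submatrix_diagonal_equiv, submatrix_mul_equiv, submatrix_mul_equiv, submatrix_id_id,
      ← star_eq_conjTranspose]
    exact hA.spectral_theorem

theorem conj_mul_conj_of_mem_unitaryGroup {V : Matrix ι ι 𝕜} (hV : V ∈ unitaryGroup ι 𝕜)
    (A B : Matrix ι ι 𝕜) : V * A * star V * (V * B * star V) = V * (A * B) * star V :=
  (map_mul (Unitary.conjStarAlgAut 𝕜 _ ⟨V, hV⟩) A B).symm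

theorem trace_conj_of_mem_unitaryGroup {V : Matrix ι ι 𝕜} (hV : V ∈ unitaryGroup ι 𝕜)
    (A : Matrix ι ι 𝕜) : trace (V * A * star V) = trace A := by
  rw [trace_mul_cycle, mem_unitaryGroup_iff'.1 hV, Matrix.one_mul]

end Matrix

theorem min_energy_on_unitary_orbit_general (m : ℕ) (ρ H : Matrix (Fin m) (Fin m) ℂ)
    (hρ : ρ.PosSemidef) (hH : H.IsHermitian)
    (p lam : Fin m → ℝ) (hpmono : Monotone p) (hlanti : Antitone lam)
    (hp : ∃ e : Equiv.Perm (Fin m), p = hρ.isHermitian.eigenvalues ∘ e)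
    (hl : ∃ e : Equiv.Perm (Fin m), lam = hH.eigenvalues ∘ e) :
    ∃ Hstar : Matrix (Fin m) (Fin m) ℂ, Hstar.IsHermitian ∧
      (∃ U ∈ Matrix.unitaryGroup (Fin m) ℂ, Hstar = U * H * star U) ∧
      ρ * Hstar = Hstar * ρ ∧
      trR (ρ * Hstar) = ∑ i, p i * lam i ∧
      ∀ U ∈ Matrix.unitaryGroup (Fin m) ℂ, ∑ i, p i * lam i ≤ trR (ρ * (U * H * star U)) := by
  obtain ⟨V, hV, hρV⟩ := hρ.isHermitian.exists_unitary_eq_conj_diagonal hp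
  obtain ⟨W, hW, hHW⟩ := hH.exists_unitary_eq_conj_diagonal hl
  have hUH (U : Matrix (Fin m) (Fin m) ℂ) :
      U * H * star U = U * W * diagonal (RCLike.ofReal ∘ lam) * star (U * W) := by
    simp only [hHW, star_mul, Matrix.mul_assoc]
  refine ⟨V * diagonal (RCLike.ofReal ∘ lam) * star V, ?_,
    ⟨V * star W, mul_mem hV (Unitary.star_mem hW), ?_⟩, ?_, ?_, fun U hU => ?_⟩
  · exact isHermitian_mul_mul_conjTranspose V
      (isHermitian_diagonal_of_self_adjoint _ (funext fun i => Complex.conj_ofReal _))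
  · rw [hUH, Matrix.mul_assoc V (star W) W, mem_unitaryGroup_iff'.1 hW, Matrix.mul_one]
  · rw [hρV, conj_mul_conj_of_mem_unitaryGroup hV, conj_mul_conj_of_mem_unitaryGroup hV,
      (commute_diagonal _ _).eq]
  · rw [trR, hρV, conj_mul_conj_of_mem_unitaryGroup hV, trace_conj_of_mem_unitaryGroup hV,
      diagonal_mul_diagonal, trace_diagonal, Complex.re_sum]
    simp
  · rw [trR, hρV, hUH, ← RCLike.re_to_complex, re_trace_conj_diagonal_mul_conj_diagonal]
    exact sum_mul_le_dotProduct_mulVec_of_mem_doublyStochastic (hpmono.antivary hlanti)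
      (norm_sq_mem_doublyStochastic_of_mem_unitaryGroup
        (mul_mem (Unitary.star_mem hV) (mul_mem hU hW)))

/-- The minimum of `Tr(ρ H')` over the unitary orbit of `H` is achieved by a
Hamiltonian commuting with `ρ`, with value `∑ᵢ p↑ᵢ λ↓ᵢ` (eigenvalues of `ρ`
non-decreasing against eigenvalues of `H` non-increasing). -/
theorem min_energy_on_unitary_orbit (m : ℕ) (ρ H : Matrix (Fin m) (Fin m) ℂ)
    (hρ : ρ.PosSemidef) (hρ1 : Matrix.trace ρ = 1) (hH : H.IsHermitian)
    (p lam : Fin m → ℝ) (hpmono : Monotone p) (hlanti : Antitone lam)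
    (hp : ∃ e : Equiv.Perm (Fin m), p = hρ.isHermitian.eigenvalues ∘ e)
    (hl : ∃ e : Equiv.Perm (Fin m), lam = hH.eigenvalues ∘ e) :
    ∃ Hstar : Matrix (Fin m) (Fin m) ℂ, Hstar.IsHermitian ∧
      (∃ U ∈ Matrix.unitaryGroup (Fin m) ℂ, Hstar = U * H * star U) ∧
      ρ * Hstar = Hstar * ρ ∧
      trR (ρ * Hstar) = ∑ i, p i * lam i ∧
      ∀ U ∈ Matrix.unitaryGroup (Fin m) ℂ, ∑ i, p i * lam i ≤ trR (ρ * (U * H * star U)) :=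
  min_energy_on_unitary_orbit_general m ρ H hρ hH p lam hpmono hlanti hp hl
end

section
/- Second law under control restrictions (upper-bound part): consider a finite protocol on a finite-dimensional system alternating unitary steps (with Hamiltonians restricted to a set ℋ containing H₀, work = energy decrease) and full thermalizations ρ ↦ ω_{H_t} at the current Hamiltonian H_t ∈ ℋ. If the protocol starts at (ρ₀, H₀), performs its first thermalization at Hamiltonian H₁ ∈ ℋ with pre-thermalization state ρ₁ = U₁ρ₀U₁†, and ends at (ρ_f, H_f), then the total work satisfies ⟨W⟩ ≤ F(ρ₀,H₀) - F(ρ_f,H_f) - (F(ρ₁,H₁) - F(ω_{H₁},H₁)). -/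
open Matrix BigOperators ComplexOrder

variable {n : Type*} [Fintype n] [DecidableEq n]

/-!
A unitary step does not change the spectrum of the state, hence its entropy, so the work it
extracts, `Tr(σH) - Tr(UσU†H')`, is exactly the free-energy drop `F(σ,H) - F(UσU†,H')`.
Summing over the protocol, `⟨W⟩` equals `F(ρ₀,H₀) - F(ρ_f,H_f) - (F(ρ₁,H₁) - F(ω_{H₁},H₁))`
minus the free-energy losses `F(ρ_j,H_j) - F(ω_{H_j},H_j)` of the later thermalizations, and
these are nonnegative because the Gibbs state minimises the free energy among density matrices.

For the variational principle write `ρ = Σ pᵢ |ψᵢ⟩⟨ψᵢ|` and `H = Σ hⱼ |φⱼ⟩⟨φⱼ|`, and let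
`gⱼ = e^{-βhⱼ}/Z`. The overlaps `cᵢⱼ = |⟨ψᵢ|φⱼ⟩|²` form a doubly stochastic matrix, and
`β (F(ρ,H) - F(ω_H,H)) = Σᵢ pᵢ log pᵢ - Σᵢⱼ cᵢⱼ pᵢ log gⱼ ≥ Σᵢⱼ cᵢⱼ (pᵢ - gⱼ) = 0`
by the pointwise inequality `p log p - p log q ≥ p - q`.
-/

open Polynomial

namespace Matrix

variable {m : Type*} [Fintype m] [DecidableEq m]

lemma charpoly_unitary_conj (A : Matrix m m ℂ) {U : Matrix m m ℂ} (hU : U ∈ unitaryGroup m ℂ) :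
    (U * A * star U).charpoly = A.charpoly := by
  rw [charpoly_mul_comm, ← mul_assoc, mem_unitaryGroup_iff'.mp hU, one_mul]

lemma IsHermitian.eigenvalues_unitary_conj {A U : Matrix m m ℂ} (hA : A.IsHermitian)
    (hU : U ∈ unitaryGroup m ℂ) (hUA : (U * A * star U).IsHermitian) :
    hUA.eigenvalues = hA.eigenvalues :=
  (hUA.eigenvalues_eq_eigenvalues_iff hA).2 (charpoly_unitary_conj A hU)

lemma IsHermitian.sum_eigenvalues_eq_of_charpoly_eq {A : Matrix m m ℂ} (hA : A.IsHermitian)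
    {d : m → ℝ} (hd : A.charpoly = ∏ i, (X - C (d i : ℂ))) (f : ℝ → ℝ) :
    ∑ i, f (hA.eigenvalues i) = ∑ i, f (d i) := by
  have hroots : Finset.univ.val.map hA.eigenvalues = Finset.univ.val.map d := by
    refine Multiset.map_injective Complex.ofReal_injective ?_
    have h := hA.roots_charpoly_eq_eigenvalues
    rw [hd, roots_prod _ _ (by simp [Finset.prod_ne_zero_iff, X_sub_C_ne_zero])] at h
    simpa [Multiset.map_map] using h.symm
  have h := congrArg (fun s => (s.map f).sum) hroots
  simp only [Multiset.map_map] at h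
  exact h

lemma charpoly_unitary_conj_diagonal {U : Matrix m m ℂ} (hU : U ∈ unitaryGroup m ℂ)
    (d : m → ℝ) :
    (U * diagonal (fun i => (d i : ℂ)) * star U).charpoly = ∏ i, (X - C (d i : ℂ)) := by
  rw [charpoly_unitary_conj _ hU, charpoly_diagonal]

lemma IsHermitian.eq_conj_diagonal {A : Matrix m m ℂ} (hA : A.IsHermitian) :
    A = (hA.eigenvectorUnitary : Matrix m m ℂ) * diagonal (fun i => (hA.eigenvalues i : ℂ)) *
      star (hA.eigenvectorUnitary : Matrix m m ℂ) :=
  hA.spectral_theorem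

lemma IsHermitian.exp_real_smul {A : Matrix m m ℂ} (hA : A.IsHermitian) (c : ℝ) :
    NormedSpace.exp ((c : ℂ) • A) =
      (hA.eigenvectorUnitary : Matrix m m ℂ) *
        diagonal (fun i => (Real.exp (c * hA.eigenvalues i) : ℂ)) *
        star (hA.eigenvectorUnitary : Matrix m m ℂ) := by
  let W : (Matrix m m ℂ)ˣ := Unitary.toUnits hA.eigenvectorUnitary
  have hdiag : diagonal (fun i => ((c * hA.eigenvalues i : ℝ) : ℂ)) =
      (c : ℂ) • diagonal (fun i => (hA.eigenvalues i : ℂ)) := by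
    rw [← diagonal_smul]
    congr 1
    ext i
    simp
  have hsmul : (c : ℂ) • A =
      W.val * diagonal (fun i => ((c * hA.eigenvalues i : ℝ) : ℂ)) * W⁻¹.val := by
    conv_lhs => rw [hA.eq_conj_diagonal]
    rw [hdiag, Matrix.mul_smul, Matrix.smul_mul]
    simp [W]
  have hexp : NormedSpace.exp (fun i => ((c * hA.eigenvalues i : ℝ) : ℂ)) =
      fun i => (Real.exp (c * hA.eigenvalues i) : ℂ) := by
    funext i
    rw [Pi.coe_exp, ← Complex.exp_eq_exp_ℂ, Complex.ofReal_exp]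
  rw [hsmul, exp_units_conj, exp_diagonal, hexp]
  simp [W]

lemma trace_conj_diagonal {U : Matrix m m ℂ} (hU : U ∈ unitaryGroup m ℂ) (d : m → ℂ) :
    (U * diagonal d * star U).trace = ∑ i, d i := by
  rw [trace_mul_cycle, mem_unitaryGroup_iff'.mp hU, one_mul, trace_diagonal]

lemma of_normSq_mem_doublyStochastic {U : Matrix m m ℂ} (hU : U ∈ unitaryGroup m ℂ) :
    of (fun i j => Complex.normSq (U i j)) ∈ doublyStochastic ℝ m := by
  refine mem_doublyStochastic_iff_sum.2
    ⟨fun i j => Complex.normSq_nonneg _, fun i => ?_, fun j => ?_⟩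
  · have h := congrFun (congrFun (mem_unitaryGroup_iff.mp hU) i) i
    simp only [mul_apply, star_apply, Complex.star_def, Complex.mul_conj, one_apply_eq] at h
    exact_mod_cast h
  · have h := congrFun (congrFun (mem_unitaryGroup_iff'.mp hU) j) j
    simp only [mul_apply, star_apply, Complex.star_def, mul_comm (starRingEnd ℂ _),
      Complex.mul_conj, one_apply_eq] at h
    exact_mod_cast h

lemma trace_conj_diagonal_mul_conj_diagonal {P V : Matrix m m ℂ} (hP : P ∈ unitaryGroup m ℂ)
    (p h : m → ℝ) :
    ((P * diagonal (fun i => (p i : ℂ)) * star P) *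
        (V * diagonal (fun j => (h j : ℂ)) * star V)).trace =
      ∑ i, ∑ j, ((Complex.normSq ((star P * V) i j) * p i * h j : ℝ) : ℂ) := by
  have hcycle : (P * diagonal (fun i => (p i : ℂ)) * star P) *
      (V * diagonal (fun j => (h j : ℂ)) * star V) = P * (diagonal (fun i => (p i : ℂ)) *
        (star P * V) * diagonal (fun j => (h j : ℂ)) * star (star P * V)) * star P := by
    simp only [star_mul, star_star, mul_assoc, mem_unitaryGroup_iff.mp hP, mul_one]
  rw [hcycle, trace_mul_cycle, mem_unitaryGroup_iff'.mp hP, one_mul]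
  generalize star P * V = M
  refine Finset.sum_congr rfl fun i _ => ?_
  rw [diag_apply, mul_apply]
  refine Finset.sum_congr rfl fun j _ => ?_
  rw [mul_diagonal, diagonal_mul, star_apply, Complex.star_def, Complex.ofReal_mul,
    Complex.ofReal_mul, Complex.normSq_eq_conj_mul_self]
  ring

end Matrix

lemma Real.mul_log_le_mul_log_add_sub {p q : ℝ} (hp : 0 ≤ p) (hq : 0 < q) :
    p * Real.log q ≤ p * Real.log p + (q - p) := by
  rcases hp.eq_or_lt with rfl | hp
  · simpa using hq.le
  · have h := mul_le_mul_of_nonneg_left (Real.log_le_sub_one_of_pos (div_pos hq hp)) hp.le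
    rw [Real.log_div hq.ne' hp.ne', mul_sub, mul_sub, mul_div_cancel₀ _ hp.ne'] at h
    linarith

lemma sum_sum_mul_log_le_of_mem_doublyStochastic {m : Type*} [Fintype m] [DecidableEq m]
    {c : Matrix m m ℝ} (hc : c ∈ doublyStochastic ℝ m) {p q : m → ℝ} (hp : ∀ i, 0 ≤ p i)
    (hq : ∀ j, 0 < q j) (hpq : ∑ i, p i = ∑ j, q j) :
    ∑ i, ∑ j, c i j * (p i * Real.log (q j)) ≤ ∑ i, p i * Real.log (p i) :=
  calc ∑ i, ∑ j, c i j * (p i * Real.log (q j))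
      ≤ ∑ i, ∑ j, c i j * (p i * Real.log (p i) + (q j - p i)) :=
        Finset.sum_le_sum fun i _ => Finset.sum_le_sum fun j _ => mul_le_mul_of_nonneg_left
          (Real.mul_log_le_mul_log_add_sub (hp i) (hq j)) (nonneg_of_mem_doublyStochastic hc)
    _ = ∑ i, p i * Real.log (p i) + (∑ j, q j - ∑ i, p i) := by
        simp only [mul_add, mul_sub, Finset.sum_add_distrib, Finset.sum_sub_distrib,
          ← Finset.sum_mul, sum_row_of_mem_doublyStochastic hc, one_mul]
        rw [Finset.sum_comm (f := fun i j => c i j * q j)]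
        simp only [← Finset.sum_mul, sum_col_of_mem_doublyStochastic hc, one_mul]
    _ = ∑ i, p i * Real.log (p i) := by rw [hpq, sub_self, add_zero]

structure IsDensityMatrix {m : Type*} [Fintype m] (ρ : Matrix m m ℂ) : Prop where
  posSemidef : ρ.PosSemidef
  trace_eq_one : ρ.trace = 1

namespace IsDensityMatrix

variable {m : Type*} [Fintype m] {ρ : Matrix m m ℂ}

lemma nonempty (hρ : IsDensityMatrix ρ) : Nonempty m := by
  by_contra h
  rw [not_nonempty_iff] at h
  simpa [Matrix.trace] using hρ.trace_eq_one

variable [DecidableEq m]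

lemma sum_eigenvalues (hρ : IsDensityMatrix ρ) : ∑ i, hρ.posSemidef.1.eigenvalues i = 1 := by
  have h := hρ.posSemidef.1.trace_eq_sum_eigenvalues
  rw [hρ.trace_eq_one] at h
  simpa using congrArg Complex.re h.symm

lemma unitary_conj (hρ : IsDensityMatrix ρ) {U : Matrix m m ℂ} (hU : U ∈ unitaryGroup m ℂ) :
    IsDensityMatrix (U * ρ * star U) where
  posSemidef := hρ.posSemidef.mul_mul_conjTranspose_same U
  trace_eq_one := by
    rw [trace_mul_cycle, mem_unitaryGroup_iff'.mp hU, one_mul, hρ.trace_eq_one]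

end IsDensityMatrix

section Gibbs

variable {m : Type*} [Fintype m] [DecidableEq m] (β : ℝ) {H : Matrix m m ℂ} (hH : H.IsHermitian)

noncomputable def partitionFunction : ℝ := ∑ i, Real.exp (-(β * hH.eigenvalues i))

noncomputable def gibbsWeight (i : m) : ℝ :=
  Real.exp (-(β * hH.eigenvalues i)) / partitionFunction β hH

lemma partitionFunction_pos [Nonempty m] : 0 < partitionFunction β hH :=
  Finset.sum_pos (fun _ _ => Real.exp_pos _) Finset.univ_nonempty

lemma gibbsWeight_pos [Nonempty m] (i : m) : 0 < gibbsWeight β hH i :=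
  div_pos (Real.exp_pos _) (partitionFunction_pos β hH)

lemma sum_gibbsWeight [Nonempty m] : ∑ i, gibbsWeight β hH i = 1 := by
  simp only [gibbsWeight]
  rw [← Finset.sum_div]
  exact div_self (partitionFunction_pos β hH).ne'

lemma log_gibbsWeight [Nonempty m] (i : m) :
    Real.log (gibbsWeight β hH i) =
      -(β * hH.eigenvalues i) - Real.log (partitionFunction β hH) := by
  rw [gibbsWeight, Real.log_div (Real.exp_pos _).ne' (partitionFunction_pos β hH).ne', Real.log_exp]

lemma gibbs_eq_conj_diagonal :
    gibbs β H = (hH.eigenvectorUnitary : Matrix m m ℂ) *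
      diagonal (fun i => (gibbsWeight β hH i : ℂ)) *
      star (hH.eigenvectorUnitary : Matrix m m ℂ) := by
  have hmexp : mexp β H = (hH.eigenvectorUnitary : Matrix m m ℂ) *
      diagonal (fun i => (Real.exp (-(β * hH.eigenvalues i)) : ℂ)) *
      star (hH.eigenvectorUnitary : Matrix m m ℂ) := by
    simpa [mexp] using hH.exp_real_smul (-β)
  have htrace : (mexp β H).trace = partitionFunction β hH := by
    rw [hmexp, trace_conj_diagonal (SetLike.coe_mem _), partitionFunction]
    push_cast
    rfl
  rw [gibbs, htrace, hmexp, ← Matrix.smul_mul, ← Matrix.mul_smul, ← diagonal_smul]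
  congr 3
  funext i
  simp [gibbsWeight, div_eq_inv_mul]

lemma isDensityMatrix_gibbs [Nonempty m] (hH : H.IsHermitian) : IsDensityMatrix (gibbs β H) := by
  have hV := SetLike.coe_mem hH.eigenvectorUnitary
  rw [gibbs_eq_conj_diagonal β hH]
  refine ⟨PosSemidef.mul_mul_conjTranspose_same (PosSemidef.diagonal fun i => ?_) _, ?_⟩
  · exact Complex.zero_le_real.mpr (gibbsWeight_pos β hH i).le
  · rw [trace_conj_diagonal hV]
    exact_mod_cast sum_gibbsWeight β hH

lemma vnEntropy_gibbs (hg : (gibbs β H).IsHermitian) :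
    vnEntropy hg = -∑ i, gibbsWeight β hH i * Real.log (gibbsWeight β hH i) := by
  have hchar := charpoly_unitary_conj_diagonal (SetLike.coe_mem hH.eigenvectorUnitary)
    (gibbsWeight β hH)
  rw [← gibbs_eq_conj_diagonal] at hchar
  rw [vnEntropy, hg.sum_eigenvalues_eq_of_charpoly_eq hchar fun x => x * Real.log x]

lemma trR_gibbs_mul :
    trR (gibbs β H * H) = ∑ i, gibbsWeight β hH i * hH.eigenvalues i := by
  have hV := SetLike.coe_mem hH.eigenvectorUnitary
  have h : gibbs β H * H = (hH.eigenvectorUnitary : Matrix m m ℂ) *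
      diagonal (fun i => ((gibbsWeight β hH i * hH.eigenvalues i : ℝ) : ℂ)) *
      star (hH.eigenvectorUnitary : Matrix m m ℂ) := by
    calc gibbs β H * H = gibbs β H * ((hH.eigenvectorUnitary : Matrix m m ℂ) *
          diagonal (fun i => (hH.eigenvalues i : ℂ)) *
          star (hH.eigenvectorUnitary : Matrix m m ℂ)) :=
          congrArg (gibbs β H * ·) hH.eq_conj_diagonal
      _ = _ := by
        rw [gibbs_eq_conj_diagonal β hH]
        simp only [mul_assoc, ← mul_assoc (star _), mem_unitaryGroup_iff'.mp hV, one_mul]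
        rw [← mul_assoc (diagonal _) (diagonal _), diagonal_mul_diagonal]
        simp
  rw [trR, h, trace_conj_diagonal hV]
  simp

end Gibbs

section FreeEnergy

variable {m : Type*} [Fintype m] [DecidableEq m] {β : ℝ} {H : Matrix m m ℂ}

lemma freeEnergy_gibbs [Nonempty m] (hβ : β ≠ 0) (hH : H.IsHermitian)
    (hg : (gibbs β H).IsHermitian) :
    freeEnergy β (gibbs β H) H hg = -Real.log (partitionFunction β hH) / β := by
  have hlog : ∑ i, gibbsWeight β hH i * Real.log (gibbsWeight β hH i) =
      -(β * ∑ i, gibbsWeight β hH i * hH.eigenvalues i) - Real.log (partitionFunction β hH) := by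
    simp only [log_gibbsWeight, mul_sub, Finset.sum_sub_distrib, ← Finset.sum_mul,
      sum_gibbsWeight, one_mul, Finset.mul_sum, ← Finset.sum_neg_distrib]
    congr 1
    exact Finset.sum_congr rfl fun i _ => by ring
  rw [freeEnergy, trR_gibbs_mul β hH, vnEntropy_gibbs β hH, hlog]
  field_simp
  ring

lemma neg_log_partitionFunction_div_le_freeEnergy (hβ : 0 < β) (hH : H.IsHermitian)
    {ρ : Matrix m m ℂ} (hρ : IsDensityMatrix ρ) :
    -Real.log (partitionFunction β hH) / β ≤ freeEnergy β ρ H hρ.posSemidef.1 := by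
  have := hρ.nonempty
  set hρh := hρ.posSemidef.1
  set p := hρh.eigenvalues
  set L := Real.log (partitionFunction β hH)
  set P := hρh.eigenvectorUnitary
  set V := hH.eigenvectorUnitary
  set c : Matrix m m ℝ := of fun i j => Complex.normSq ((star (P : Matrix m m ℂ) * V) i j)
  have hc : c ∈ doublyStochastic ℝ m :=
    of_normSq_mem_doublyStochastic (mul_mem (Unitary.star_mem P.2) V.2)
  have htr : trR (ρ * H) = ∑ i, ∑ j, c i j * p i * hH.eigenvalues j := by
    have h := trace_conj_diagonal_mul_conj_diagonal P.2 p hH.eigenvalues (V := V)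
    rw [← hρh.eq_conj_diagonal, ← hH.eq_conj_diagonal] at h
    rw [trR, h]
    simp [c]
  have hcross : ∑ i, ∑ j, c i j * (p i * Real.log (gibbsWeight β hH j)) =
      -(β * trR (ρ * H)) - L := by
    simp only [htr, log_gibbsWeight, Finset.mul_sum, mul_sub, Finset.sum_sub_distrib]
    congr 1
    · simp only [← Finset.sum_neg_distrib]
      exact Finset.sum_congr rfl fun i _ => Finset.sum_congr rfl fun j _ => by ring
    · simp only [← Finset.sum_mul, sum_row_of_mem_doublyStochastic hc, one_mul]
      rw [hρ.sum_eigenvalues, one_mul]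
  have hklein := sum_sum_mul_log_le_of_mem_doublyStochastic hc (hρ.posSemidef.eigenvalues_nonneg)
    (gibbsWeight_pos β hH) (by rw [hρ.sum_eigenvalues, sum_gibbsWeight])
  rw [hcross] at hklein
  rw [freeEnergy, vnEntropy]
  calc -L / β ≤ (β * trR (ρ * H) + ∑ i, p i * Real.log (p i)) / β :=
        div_le_div_of_nonneg_right (by linarith) hβ.le
    _ = _ := by field_simp; ring

theorem freeEnergy_gibbs_le (hβ : 0 < β) (hH : H.IsHermitian) {ρ : Matrix m m ℂ}
    (hρ : IsDensityMatrix ρ) (hg : (gibbs β H).IsHermitian) :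
    freeEnergy β (gibbs β H) H hg ≤ freeEnergy β ρ H hρ.posSemidef.1 := by
  have := hρ.nonempty
  rw [freeEnergy_gibbs hβ.ne' hH]
  exact neg_log_partitionFunction_div_le_freeEnergy hβ hH hρ

lemma vnEntropy_unitary_conj {ρ U : Matrix m m ℂ} (hρ : ρ.IsHermitian) (hU : U ∈ unitaryGroup m ℂ)
    (hUρ : (U * ρ * star U).IsHermitian) : vnEntropy hUρ = vnEntropy hρ := by
  rw [vnEntropy, vnEntropy, hρ.eigenvalues_unitary_conj hU hUρ]

lemma trR_sub_trR_eq_freeEnergy_sub_of_unitary_conj {σ σ' U H' : Matrix m m ℂ}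
    (hσ : σ.IsHermitian) (hσ' : σ'.IsHermitian) (hU : U ∈ unitaryGroup m ℂ)
    (hσσ' : σ' = U * σ * star U) :
    trR (σ * H) - trR (σ' * H') = freeEnergy β σ H hσ - freeEnergy β σ' H' hσ' := by
  subst hσσ'
  rw [freeEnergy, freeEnergy, vnEntropy_unitary_conj hσ hU hσ']
  ring

end FreeEnergy

lemma sum_Ico_sub_add_le_of_le {a b : ℕ → ℝ} {N : ℕ} (hN : 1 ≤ N)
    (hba : ∀ j, 1 < j → j ≤ N → b j ≤ a j) :
    ∑ j ∈ Finset.Ico 1 N, (b j - a (j + 1)) + b N ≤ b 1 := by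
  have hle : ∑ j ∈ Finset.Ico 1 N, (b j - a (j + 1)) ≤ ∑ j ∈ Finset.Ico 1 N, (b j - b (j + 1)) :=
    Finset.sum_le_sum fun j hj => by
      rw [Finset.mem_Ico] at hj
      linarith [hba (j + 1) (by omega) (by omega)]
  have htel : ∑ j ∈ Finset.Ico 1 N, (b j - b (j + 1)) = b 1 - b N := by
    rw [← neg_sub, ← Finset.sum_Ico_sub b hN, ← Finset.sum_neg_distrib]
    simp
  linarith

theorem second_law_restricted_control_general (β : ℝ) (hβ : 0 < β) (N : ℕ) (hN : 1 ≤ N)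
    (H : ℕ → Matrix n n ℂ) (ρ : ℕ → Matrix n n ℂ)
    (ρf Hf : Matrix n n ℂ)
    (hH : ∀ j, (H j).IsHermitian)
    (hρ0 : (ρ 0).PosSemidef) (ht0 : Matrix.trace (ρ 0) = 1)
    (hρh : ∀ j, (ρ j).IsHermitian) (hρfh : ρf.IsHermitian)
    (hg : ∀ j, (gibbs β (H j)).IsHermitian)
    (hU1 : ∃ U ∈ Matrix.unitaryGroup n ℂ, ρ 1 = U * ρ 0 * star U)
    (hUj : ∀ j, 1 ≤ j → j < N →
      ∃ U ∈ Matrix.unitaryGroup n ℂ, ρ (j + 1) = U * gibbs β (H j) * star U)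
    (hUf : ∃ U ∈ Matrix.unitaryGroup n ℂ, ρf = U * gibbs β (H N) * star U)
    (W : ℝ)
    (hW : W = trR (ρ 0 * H 0) - trR (ρ 1 * H 1) +
      (∑ j ∈ Finset.Ico 1 N,
        (trR (gibbs β (H j) * H j) - trR (ρ (j + 1) * H (j + 1)))) +
      trR (gibbs β (H N) * H N) - trR (ρf * Hf)) :
    W ≤ freeEnergy β (ρ 0) (H 0) (hρh 0) - freeEnergy β ρf Hf hρfh -
      (freeEnergy β (ρ 1) (H 1) (hρh 1) - freeEnergy β (gibbs β (H 1)) (H 1) (hg 1)) := by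
  have hρ₀ : IsDensityMatrix (ρ 0) := ⟨hρ0, ht0⟩
  have := hρ₀.nonempty
  obtain ⟨U₁, hU₁, hρ₁⟩ := hU1
  obtain ⟨Uf, hUf, hρf⟩ := hUf
  have hstate : ∀ j, 1 ≤ j → j ≤ N → IsDensityMatrix (ρ j) := by
    intro j h1 hjN
    obtain rfl | h1 := h1.eq_or_lt
    · exact hρ₁ ▸ hρ₀.unitary_conj hU₁
    · obtain ⟨U, hU, hρj⟩ := hUj (j - 1) (by omega) (by omega)
      rw [Nat.sub_add_cancel h1.le] at hρj
      exact hρj ▸ (isDensityMatrix_gibbs β (hH _)).unitary_conj hU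
  have hwork : ∀ j ∈ Finset.Ico 1 N,
      trR (gibbs β (H j) * H j) - trR (ρ (j + 1) * H (j + 1)) =
        freeEnergy β (gibbs β (H j)) (H j) (hg j) -
          freeEnergy β (ρ (j + 1)) (H (j + 1)) (hρh _) := by
    intro j hj
    obtain ⟨U, hU, hρj⟩ := hUj j (Finset.mem_Ico.1 hj).1 (Finset.mem_Ico.1 hj).2
    exact trR_sub_trR_eq_freeEnergy_sub_of_unitary_conj (hg j) (hρh _) hU hρj
  have hfirst := trR_sub_trR_eq_freeEnergy_sub_of_unitary_conj (β := β) (H := H 0) (H' := H 1)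
    (hρh 0) (hρh 1) hU₁ hρ₁
  have hlast := trR_sub_trR_eq_freeEnergy_sub_of_unitary_conj (β := β) (H := H N) (H' := Hf)
    (hg N) hρfh hUf hρf
  have htel := sum_Ico_sub_add_le_of_le
    (a := fun j => freeEnergy β (ρ j) (H j) (hρh j))
    (b := fun j => freeEnergy β (gibbs β (H j)) (H j) (hg j)) hN
    fun j h1 hjN => freeEnergy_gibbs_le hβ (hH j) (hstate j h1.le hjN) (hg j)
  rw [Finset.sum_congr rfl hwork] at hW
  linarith

/-- Second law under control restrictions (upper-bound part of Theorem 1): a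
protocol alternating unitary steps (Hamiltonians restricted to a set `ℋ`) and
full thermalizations satisfies
`⟨W⟩ ≤ F(ρ₀,H₀) - F(ρ_f,H_f) - (F(ρ₁,H₁) - F(ω_{H₁},H₁))`. -/
theorem second_law_restricted_control (β : ℝ) (hβ : 0 < β) (N : ℕ) (hN : 1 ≤ N)
    (ℋ : Set (Matrix n n ℂ)) (H : ℕ → Matrix n n ℂ) (ρ : ℕ → Matrix n n ℂ)
    (ρf Hf : Matrix n n ℂ)
    (hmem : ∀ j ≤ N, H j ∈ ℋ) (hHfmem : Hf ∈ ℋ)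
    (hH : ∀ j, (H j).IsHermitian) (hHf : Hf.IsHermitian)
    (hρ0 : (ρ 0).PosSemidef) (ht0 : Matrix.trace (ρ 0) = 1)
    (hρh : ∀ j, (ρ j).IsHermitian) (hρfh : ρf.IsHermitian)
    (hg : ∀ j, (gibbs β (H j)).IsHermitian)
    (hU1 : ∃ U ∈ Matrix.unitaryGroup n ℂ, ρ 1 = U * ρ 0 * star U)
    (hUj : ∀ j, 1 ≤ j → j < N →
      ∃ U ∈ Matrix.unitaryGroup n ℂ, ρ (j + 1) = U * gibbs β (H j) * star U)
    (hUf : ∃ U ∈ Matrix.unitaryGroup n ℂ, ρf = U * gibbs β (H N) * star U)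
    (W : ℝ)
    (hW : W = trR (ρ 0 * H 0) - trR (ρ 1 * H 1) +
      (∑ j ∈ Finset.Ico 1 N,
        (trR (gibbs β (H j) * H j) - trR (ρ (j + 1) * H (j + 1)))) +
      trR (gibbs β (H N) * H N) - trR (ρf * Hf)) :
    W ≤ freeEnergy β (ρ 0) (H 0) (hρh 0) - freeEnergy β ρf Hf hρfh -
      (freeEnergy β (ρ 1) (H 1) (hρh 1) - freeEnergy β (gibbs β (H 1)) (H 1) (hg 1)) :=
  second_law_restricted_control_general β hβ N hN H ρ ρf Hf hH hρ0 ht0 hρh hρfh hg hU1 hUj hUf W hW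
end

section
/- Two-level norm-restricted no-work result: consider a classical bit with Hamiltonian Δ|1⟩⟨1| where Δ ∈ [Δ_min, Δ_max], β > 0, initial excitation probability p₀ ≤ e^{-βΔ_max}/(1+e^{-βΔ_max}) and initial gap Δ₀ = Δ_max. For any Δ₁ ∈ [Δ_min, Δ_max], the work from first shifting the gap to Δ₁ (work p₀(Δ_max - Δ₁)) plus the optimal isothermal work back (bounded by F(ω_{Δ₁}) - F(ω_{Δ_max}) with F(ω_Δ) = -β⁻¹ log(1+e^{-βΔ})) is ≤ 0. -/
open Matrix BigOperators ComplexOrder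

variable {n : Type*} [Fintype n] [DecidableEq n]

/-!
The two-level free energy `F(Δ) = -β⁻¹ log (1 + e^{-βΔ})` is concave in the gap `Δ`, and its
slope is the thermal excitation probability `p(Δ) = e^{-βΔ} / (1 + e^{-βΔ})`. The tangent line at
`Δmax` gives `F(Δ₁) - F(Δmax) ≤ -p(Δmax) (Δmax - Δ₁)`, which absorbs the shifting work
`p₀ (Δmax - Δ₁)` because `p₀ ≤ p(Δmax)` and `Δ₁ ≤ Δmax`.
-/

open Real

lemma exp_div_one_add_exp_mul_sub_le_log_sub_log (x y : ℝ) :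
    exp y / (1 + exp y) * (x - y) ≤ log (1 + exp x) - log (1 + exp y) := by
  set s := exp y / (1 + exp y)
  have hs₀ : 0 ≤ s := by positivity
  have hs₁ : 0 ≤ 1 - s := by rw [sub_nonneg, div_le_one (by positivity)]; linarith
  -- `(1 + eˣ) / (1 + e^y)` is the convex combination `(1 - s) • 1 + s • e^{x - y}`.
  have hmix : (1 + exp x) / (1 + exp y) = (1 - s) * exp 0 + s * exp (x - y) := by
    rw [exp_zero, exp_sub]
    simp only [s]
    field_simp
    ring
  have hjensen : exp (s * (x - y)) ≤ (1 + exp x) / (1 + exp y) := by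
    rw [hmix]
    simpa using convexOn_exp.2 (Set.mem_univ 0) (Set.mem_univ (x - y)) hs₁ hs₀ (by ring)
  rw [← log_div (by positivity) (by positivity), ← log_exp (s * (x - y))]
  exact log_le_log (exp_pos _) hjensen

noncomputable def twoLevelFreeEnergy (β Δ : ℝ) : ℝ := -β⁻¹ * log (1 + exp (-(β * Δ)))

noncomputable def excitationProb (β Δ : ℝ) : ℝ := exp (-(β * Δ)) / (1 + exp (-(β * Δ)))

lemma twoLevelFreeEnergy_le_add_excitationProb_mul {β : ℝ} (hβ : 0 < β) (Δ Δ' : ℝ) :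
    twoLevelFreeEnergy β Δ' ≤ twoLevelFreeEnergy β Δ + excitationProb β Δ * (Δ' - Δ) := by
  have h := exp_div_one_add_exp_mul_sub_le_log_sub_log (-(β * Δ')) (-(β * Δ))
  rw [← excitationProb] at h
  have h' := mul_le_mul_of_nonneg_left h (inv_pos.2 hβ).le
  unfold twoLevelFreeEnergy
  field_simp at h' ⊢
  linarith

lemma log_div_one_add_exp_eq_twoLevelFreeEnergy_sub {β : ℝ} (Δ Δ' : ℝ) :
    β⁻¹ * log ((1 + exp (-(β * Δ))) / (1 + exp (-(β * Δ'))))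
      = twoLevelFreeEnergy β Δ' - twoLevelFreeEnergy β Δ := by
  rw [log_div (by positivity) (by positivity), twoLevelFreeEnergy, twoLevelFreeEnergy]
  ring

theorem no_work_norm_restricted_general (β Δmax Δ1 p0 : ℝ) (hβ : 0 < β)
    (h2 : Δ1 ≤ Δmax)
    (hpth : p0 ≤ Real.exp (-(β * Δmax)) / (1 + Real.exp (-(β * Δmax)))) :
    p0 * (Δmax - Δ1) + β⁻¹ *
      Real.log ((1 + Real.exp (-(β * Δmax))) / (1 + Real.exp (-(β * Δ1)))) ≤ 0 := by
  rw [log_div_one_add_exp_eq_twoLevelFreeEnergy_sub]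
  rw [← excitationProb] at hpth
  have hshift : p0 * (Δmax - Δ1) ≤ excitationProb β Δmax * (Δmax - Δ1) :=
    mul_le_mul_of_nonneg_right hpth (sub_nonneg.2 h2)
  have htangent := twoLevelFreeEnergy_le_add_excitationProb_mul hβ Δmax Δ1
  linarith

/-- Two-level norm-restricted no-work result:
`p₀ (Δmax - Δ₁) + β⁻¹ log ((1+e^{-βΔmax})/(1+e^{-βΔ₁})) ≤ 0` whenever
`p₀ ≤ e^{-βΔmax}/(1+e^{-βΔmax})` and `Δmin ≤ Δ₁ ≤ Δmax`. -/
theorem no_work_norm_restricted (β Δmin Δmax Δ1 p0 : ℝ) (hβ : 0 < β)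
    (h1 : Δmin ≤ Δ1) (h2 : Δ1 ≤ Δmax) (hp0 : 0 ≤ p0)
    (hpth : p0 ≤ Real.exp (-(β * Δmax)) / (1 + Real.exp (-(β * Δmax)))) :
    p0 * (Δmax - Δ1) + β⁻¹ *
      Real.log ((1 + Real.exp (-(β * Δmax))) / (1 + Real.exp (-(β * Δ1)))) ≤ 0 :=
  no_work_norm_restricted_general β Δmax Δ1 p0 hβ h2 hpth
end

section
/- Two-qubit thermo-majorization transition: let β = 1, H₀ = σ_z⊗σ_z, and for t ∈ ℝ let ω_t be the Gibbs state of σ_z⊗σ_z + t·𝟙⊗σ_z. The maximally mixed state 𝟙/4 thermo-majorizes ω_t relative to ω_0 (i.e., there exists a stochastic map fixing the spectrum of ω_0 and mapping the uniform distribution (1/4,...,1/4) to the spectrum of ω_t, both in the common eigenbasis) if and only if |t| ≤ t_c = artanh((e²-1)/(2e²)). -/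
open Matrix BigOperators ComplexOrder

variable {n : Type*} [Fintype n] [DecidableEq n]

open Kronecker

/-- Spectrum of the Gibbs state of `σ_z ⊗ σ_z` at `β = 1`. -/
noncomputable def specOmega0 : Fin 4 → ℝ :=
  fun i => (![Real.exp 2, Real.exp 2, 1, 1] i) / (2 * (1 + Real.exp 2))

/-- Spectrum of the Gibbs state of `σ_z ⊗ σ_z + t 𝟙 ⊗ σ_z` at `β = 1`. -/
noncomputable def specOmegaT (t : ℝ) : Fin 4 → ℝ :=
  fun i => (![Real.exp 2 * (1 + Real.tanh t), Real.exp 2 * (1 - Real.tanh t),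
    1 + Real.tanh t, 1 - Real.tanh t] i) / (2 * (1 + Real.exp 2))

/-!
The ratio `u / ω₀` of the uniform vector to `ω₀` equals `(1 + e²) / (2e²)` on the two low-energy
levels and `(1 + e²) / 2` on the two high-energy ones. Since a nonnegative `M` with `M ω₀ = ω₀`
has row sums at least `ω₀ i / max ω₀`, the image `q = M u` satisfies `q / ω₀ ≥ (1 + e²) / (2e²)`.
Conversely, for any distribution `q` with `q / ω₀` between the two values, the map sending both
low-energy levels to a column `A` and both high-energy levels to a column `B` works, with `A` and
`B` solved for from `M ω₀ = ω₀` and `M u = q`. For `q = ω_t` we have `q / ω₀ = 1 ± tanh t`, so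
the lower bound reads `|tanh t| ≤ (e² - 1) / (2e²)`.
-/

namespace Real

theorem tanh_le_tanh {a b : ℝ} : tanh a ≤ tanh b ↔ a ≤ b := by
  rw [← artanh_le_artanh_iff ⟨neg_one_lt_tanh a, tanh_lt_one a⟩ ⟨neg_one_lt_tanh b, tanh_lt_one b⟩,
    artanh_tanh, artanh_tanh]

theorem abs_tanh_le_tanh {t c : ℝ} : |tanh t| ≤ tanh c ↔ |t| ≤ c := by
  rw [abs_le, abs_le, ← tanh_neg, tanh_le_tanh, tanh_le_tanh]

end Real

namespace Matrix

theorem mul_le_mul_mulVec_const_of_mulVec_apply_eq {ι : Type*} [Fintype ι] {M : Matrix ι ι ℝ}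
    (hM : ∀ i j, 0 ≤ M i j) {p : ι → ℝ} {a c : ℝ} (ha : 0 ≤ a) (hp : ∀ j, p j ≤ c) {i : ι}
    (hMp : (M *ᵥ p) i = p i) : a * p i ≤ c * (M *ᵥ fun _ => a) i := by
  have hrow : p i ≤ c * ∑ j, M i j := calc
    p i = ∑ j, M i j * p j := hMp.symm
    _ ≤ ∑ j, M i j * c := by gcongr with j; exacts [hM i j, hp j]
    _ = c * ∑ j, M i j := by rw [← Finset.sum_mul, mul_comm]
  have hconst : (M *ᵥ fun _ => a) i = a * ∑ j, M i j := by
    simp only [mulVec, dotProduct, Finset.mul_sum, mul_comm]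
  rw [hconst, mul_left_comm]
  exact mul_le_mul_of_nonneg_left hrow ha

theorem transpose_of_mem_colStochastic {R : Type*} [Semiring R] [PartialOrder R] [IsOrderedRing R]
    {c : n → n → R} (hc : ∀ j, 0 ≤ c j) (hc_sum : ∀ j, ∑ i, c j i = 1) :
    (of c)ᵀ ∈ colStochastic R n :=
  mem_colStochastic_iff_sum.2 ⟨fun i j => hc j i, hc_sum⟩

theorem transpose_of_mulVec_fin_four {R : Type*} [CommSemiring R] (A B v : Fin 4 → R) :
    (of ![A, A, B, B])ᵀ *ᵥ v = (v 0 + v 1) • A + (v 2 + v 3) • B := by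
  rw [mulVec_transpose, vecMul_eq_sum, Fin.sum_univ_four]
  simp only [add_smul]
  abel

end Matrix

/-- With `E = exp (2β)` and `s = tanh (β t)`, `gibbsSpec E` and `tiltedSpec E s` are the spectra
of the Gibbs states of `σ_z ⊗ σ_z` and `σ_z ⊗ σ_z + t 𝟙 ⊗ σ_z` at inverse temperature `β`. -/
noncomputable def gibbsSpec (E : ℝ) : Fin 4 → ℝ :=
  fun i => ![E, E, 1, 1] i / (2 * (1 + E))

noncomputable def tiltedSpec (E s : ℝ) : Fin 4 → ℝ :=
  fun i => ![E * (1 + s), E * (1 - s), 1 + s, 1 - s] i / (2 * (1 + E))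

section
variable {E s : ℝ}

theorem sum_gibbsSpec (hE : 0 < E) : ∑ i, gibbsSpec E i = 1 := by
  simp only [gibbsSpec, Fin.sum_univ_four, cons_val, ← add_div]
  rw [div_eq_one_iff_eq (by positivity)]
  ring

theorem sum_tiltedSpec (hE : 0 < E) : ∑ i, tiltedSpec E s i = 1 := by
  simp only [tiltedSpec, Fin.sum_univ_four, cons_val, ← add_div]
  rw [div_eq_one_iff_eq (by positivity)]
  ring

theorem two_smul_tiltedSpec_le (hE : 1 < E) (hs : |s| ≤ (E - 1) / 2) :
    (2 : ℝ) • tiltedSpec E s ≤ (1 + E) • gibbsSpec E := by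
  obtain ⟨hs₁, hs₂⟩ := abs_le.1 hs
  intro i
  fin_cases i <;>
    simp only [gibbsSpec, tiltedSpec, Pi.smul_apply, smul_eq_mul, Fin.zero_eta, Fin.mk_one,
      Fin.reduceFinMk, cons_val] <;>
    field_simp <;> nlinarith

theorem smul_gibbsSpec_le (hE : 1 < E) (hs : |s| ≤ (E - 1) / (2 * E)) :
    (1 + E) • gibbsSpec E ≤ (2 * E) • tiltedSpec E s := by
  obtain ⟨hs₁, hs₂⟩ := abs_le'.1 hs
  rw [le_div_iff₀ (by linarith)] at hs₁ hs₂
  intro i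
  fin_cases i <;>
    simp only [gibbsSpec, tiltedSpec, Pi.smul_apply, smul_eq_mul, Fin.zero_eta, Fin.mk_one,
      Fin.reduceFinMk, cons_val] <;>
    field_simp <;> nlinarith

theorem exists_colStochastic_of_abs_le (hE : 1 < E) (hs : |s| ≤ (E - 1) / (2 * E)) :
    ∃ M ∈ colStochastic ℝ (Fin 4),
      M *ᵥ gibbsSpec E = gibbsSpec E ∧ M *ᵥ (fun _ => (1 : ℝ) / 4) = tiltedSpec E s := by
  have hE₀ : 0 < E := by linarith
  have hE₁ : E - 1 ≠ 0 := by linarith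
  have hs' : |s| ≤ (E - 1) / 2 :=
    hs.trans (div_le_div_of_nonneg_left (by linarith) two_pos (by linarith))
  set p := gibbsSpec E
  set q := tiltedSpec E s
  set A := (E - 1)⁻¹ • ((1 + E) • p - (2 : ℝ) • q)
  set B := (E - 1)⁻¹ • ((2 * E) • q - (1 + E) • p)
  have hA : 0 ≤ A :=
    smul_nonneg (inv_nonneg.2 (by linarith)) (sub_nonneg.2 (two_smul_tiltedSpec_le hE hs'))
  have hB : 0 ≤ B :=
    smul_nonneg (inv_nonneg.2 (by linarith)) (sub_nonneg.2 (smul_gibbsSpec_le hE hs))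
  have hA_sum : ∑ i, A i = 1 := by
    simp only [A, Pi.smul_apply, Pi.sub_apply, smul_eq_mul, ← Finset.mul_sum,
      Finset.sum_sub_distrib, p, q, sum_gibbsSpec hE₀, sum_tiltedSpec hE₀]
    field_simp
    ring
  have hB_sum : ∑ i, B i = 1 := by
    simp only [B, Pi.smul_apply, Pi.sub_apply, smul_eq_mul, ← Finset.mul_sum,
      Finset.sum_sub_distrib, p, q, sum_gibbsSpec hE₀, sum_tiltedSpec hE₀]
    field_simp
    ring
  have hp : p 0 + p 1 = E / (1 + E) ∧ p 2 + p 3 = 1 / (1 + E) := by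
    constructor <;> simp only [p, gibbsSpec, cons_val, ← add_div] <;> field_simp <;> ring
  refine ⟨(of ![A, A, B, B])ᵀ, transpose_of_mem_colStochastic ?_ ?_, ?_, ?_⟩
  · simpa [Fin.forall_fin_succ] using ⟨hA, hB⟩
  · simpa [Fin.forall_fin_succ] using ⟨hA_sum, hB_sum⟩
  · rw [transpose_of_mulVec_fin_four, hp.1, hp.2]
    simp only [A, B, smul_sub, smul_smul]
    match_scalars <;> field_simp <;> ring
  · rw [transpose_of_mulVec_fin_four]
    simp only [A, B, smul_sub, smul_smul]
    match_scalars <;> field_simp <;> ring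

theorem abs_le_of_exists_colStochastic (hE : 1 < E)
    (h : ∃ M ∈ colStochastic ℝ (Fin 4),
      M *ᵥ gibbsSpec E = gibbsSpec E ∧ M *ᵥ (fun _ => (1 : ℝ) / 4) = tiltedSpec E s) :
    |s| ≤ (E - 1) / (2 * E) := by
  obtain ⟨M, hM, hMp, hMu⟩ := h
  have hE₀ : 0 < E := by linarith
  have hmax : ∀ j, gibbsSpec E j ≤ E / (2 * (1 + E)) := by
    intro j
    simp only [gibbsSpec]
    gcongr
    fin_cases j <;>
      simp only [Fin.zero_eta, Fin.mk_one, Fin.reduceFinMk, cons_val, le_refl, hE.le]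
  have hlow (i : Fin 4) : 1 / 4 * gibbsSpec E i ≤ E / (2 * (1 + E)) * tiltedSpec E s i := by
    rw [← hMu]
    exact mul_le_mul_mulVec_const_of_mulVec_apply_eq (fun _ _ => nonneg_of_mem_colStochastic hM)
      (by norm_num) hmax (congrFun hMp i)
  have h₂ := hlow 2
  have h₃ := hlow 3
  simp only [gibbsSpec, tiltedSpec, cons_val] at h₂ h₃
  rw [abs_le', le_div_iff₀ (by linarith), le_div_iff₀ (by linarith)]
  field_simp at h₂ h₃
  constructor <;> nlinarith

theorem exists_colStochastic_iff_abs_le (hE : 1 < E) :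
    (∃ M ∈ colStochastic ℝ (Fin 4),
      M *ᵥ gibbsSpec E = gibbsSpec E ∧ M *ᵥ (fun _ => (1 : ℝ) / 4) = tiltedSpec E s) ↔
      |s| ≤ (E - 1) / (2 * E) :=
  ⟨abs_le_of_exists_colStochastic hE, exists_colStochastic_of_abs_le hE⟩

end

theorem two_qubit_thermo_majorization_general (t tc : ℝ)
    (htc : Real.tanh tc = (Real.exp 2 - 1) / (2 * Real.exp 2)) :
    (∃ M : Matrix (Fin 4) (Fin 4) ℝ, (∀ i j, 0 ≤ M i j) ∧ (∀ j, ∑ i, M i j = 1) ∧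
      M.mulVec specOmega0 = specOmega0 ∧
      M.mulVec (fun _ => (1 : ℝ) / 4) = specOmegaT t) ↔ |t| ≤ tc := by
  rw [← Real.abs_tanh_le_tanh, htc,
    ← exists_colStochastic_iff_abs_le (Real.one_lt_exp_iff.2 two_pos)]
  simp only [mem_colStochastic_iff_sum, and_assoc]
  rfl

/-- Two-qubit thermo-majorization: the maximally mixed state can be mapped to
`ω_t` by a stochastic map fixing the spectrum of `ω_0` iff `|t| ≤ t_c`, where
`tanh t_c = (e²-1)/(2e²)`. -/
theorem two_qubit_thermo_majorization (t tc : ℝ) (htcpos : 0 < tc)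
    (htc : Real.tanh tc = (Real.exp 2 - 1) / (2 * Real.exp 2)) :
    (∃ M : Matrix (Fin 4) (Fin 4) ℝ, (∀ i j, 0 ≤ M i j) ∧ (∀ j, ∑ i, M i j = 1) ∧
      M.mulVec specOmega0 = specOmega0 ∧
      M.mulVec (fun _ => (1 : ℝ) / 4) = specOmegaT t) ↔ |t| ≤ tc :=
  two_qubit_thermo_majorization_general t tc htc
end

section
/- Work gap in the local two-qubit example: for 0 < t ≤ t_c = artanh((e²-1)/(2e²)) and β = 1, the free-energy difference ΔF(ω_t, σ_z⊗σ_z) between the Gibbs state ω_t of σ_z⊗σ_z + t·𝟙⊗σ_z and the Gibbs state of σ_z⊗σ_z equals t·tanh(t) - log(cosh(t)), and this quantity is strictly positive for t ≠ 0. -/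
open Matrix BigOperators ComplexOrder

variable {n : Type*} [Fintype n] [DecidableEq n]

open Kronecker

/-- The Pauli-Z matrix. -/
def pauliZ : Matrix (Fin 2) (Fin 2) ℂ := !![1, 0; 0, -1]

/-- The two-qubit Hamiltonian `σ_z ⊗ σ_z + t · 𝟙 ⊗ σ_z`. -/
noncomputable def twoQubitH (t : ℝ) : Matrix (Fin 2 × Fin 2) (Fin 2 × Fin 2) ℂ :=
  pauliZ ⊗ₖ pauliZ + (t : ℂ) • ((1 : Matrix (Fin 2) (Fin 2) ℂ) ⊗ₖ pauliZ)

/-!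
Both Hamiltonians are diagonal in the computational basis, so every quantity is classical. For
the Gibbs weights `p` of levels `E'` one has `log pᵢ = -β E'ᵢ - log Z'`, hence
`F(p, E) = ⟨E - E'⟩_p - log Z' / β`. Here `E_t = E_0 + t s` with `s` the spin of the second
qubit, so the gap is `-t ⟨s⟩_t + log (Z_0 / Z_t) = t tanh t - log cosh t`. Positivity: this
function of `t` is even, vanishes at `0`, and has derivative `t / cosh² t`.
-/

section GibbsWeights

variable {m : Type*} [Fintype m]

noncomputable def gibbsWeights (β : ℝ) (E : m → ℝ) (i : m) : ℝ :=
  Real.exp (-β * E i) / ∑ j, Real.exp (-β * E j)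

theorem sum_exp_pos [Nonempty m] (f : m → ℝ) : 0 < ∑ i, Real.exp (f i) :=
  Finset.sum_pos (fun _ _ => Real.exp_pos _) Finset.univ_nonempty

theorem sum_gibbsWeights [Nonempty m] (β : ℝ) (E : m → ℝ) : ∑ i, gibbsWeights β E i = 1 := by
  simp only [gibbsWeights, ← Finset.sum_div]
  exact div_self (sum_exp_pos _).ne'

theorem log_gibbsWeights [Nonempty m] (β : ℝ) (E : m → ℝ) (i : m) :
    Real.log (gibbsWeights β E i) = -β * E i - Real.log (∑ j, Real.exp (-β * E j)) := by
  rw [gibbsWeights, Real.log_div (Real.exp_pos _).ne' (sum_exp_pos _).ne', Real.log_exp]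

end GibbsWeights

section Diagonal

variable {m : Type*} [Fintype m] [DecidableEq m]

theorem Matrix.IsHermitian.map_eigenvalues_diagonal {𝕜 : Type*} [RCLike 𝕜] (d : m → ℝ)
    (h : (diagonal fun i => (d i : 𝕜)).IsHermitian) :
    Finset.univ.val.map h.eigenvalues = Finset.univ.val.map d := by
  apply Multiset.map_injective (RCLike.ofReal_injective (K := 𝕜))
  rw [Multiset.map_map, ← h.roots_charpoly_eq_eigenvalues, charpoly_diagonal]
  simpa [Multiset.map_map, Function.comp_def] using
    Polynomial.roots_multiset_prod_X_sub_C (Finset.univ.val.map fun i => (d i : 𝕜))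

theorem Matrix.IsHermitian.sum_comp_eigenvalues_diagonal {𝕜 : Type*} [RCLike 𝕜] (d : m → ℝ)
    (h : (diagonal fun i => (d i : 𝕜)).IsHermitian) (f : ℝ → ℝ) :
    ∑ i, f (h.eigenvalues i) = ∑ i, f (d i) := by
  have := congrArg (fun s => (s.map f).sum) h.map_eigenvalues_diagonal
  simp only [Multiset.map_map] at this
  exact this

theorem vnEntropy_of_eq_diagonal {ρ : Matrix m m ℂ} (h : ρ.IsHermitian) {p : m → ℝ}
    (hp : ρ = diagonal fun i => (p i : ℂ)) :
    vnEntropy h = -∑ i, p i * Real.log (p i) := by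
  subst hp
  exact congrArg Neg.neg (h.sum_comp_eigenvalues_diagonal p fun x => x * Real.log x)

theorem trR_diagonal_mul_diagonal (a b : m → ℝ) :
    trR ((diagonal fun i => (a i : ℂ)) * diagonal fun i => (b i : ℂ)) = ∑ i, a i * b i := by
  simp [trR, diagonal_mul_diagonal, trace_diagonal, Complex.re_sum, ← Complex.ofReal_mul]

theorem mexp_diagonal (β : ℝ) (E : m → ℝ) :
    mexp β (diagonal fun i => (E i : ℂ)) = diagonal fun i => (Real.exp (-β * E i) : ℂ) := by
  rw [mexp, ← diagonal_smul, exp_diagonal]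
  congr 1
  funext i
  simp [← Complex.exp_eq_exp_ℂ]

theorem gibbs_diagonal (β : ℝ) (E : m → ℝ) :
    gibbs β (diagonal fun i => (E i : ℂ)) = diagonal fun i => (gibbsWeights β E i : ℂ) := by
  rw [gibbs, mexp_diagonal, trace_diagonal, ← diagonal_smul]
  congr 1
  funext i
  simp [gibbsWeights, div_eq_inv_mul]

theorem freeEnergy_gibbs_of_eq_diagonal [Nonempty m] {β : ℝ} (hβ : β ≠ 0) {H' H : Matrix m m ℂ}
    {E' E : m → ℝ} (h : (gibbs β H').IsHermitian) (hH' : H' = diagonal fun i => (E' i : ℂ))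
    (hH : H = diagonal fun i => (E i : ℂ)) :
    freeEnergy β (gibbs β H') H h =
      ∑ i, gibbsWeights β E' i * (E i - E' i) - Real.log (∑ j, Real.exp (-β * E' j)) / β := by
  subst hH' hH
  rw [freeEnergy, vnEntropy_of_eq_diagonal h (gibbs_diagonal β E'), gibbs_diagonal,
    trR_diagonal_mul_diagonal]
  simp only [log_gibbsWeights, mul_sub, Finset.sum_sub_distrib, ← Finset.sum_mul,
    sum_gibbsWeights]
  simp only [mul_left_comm _ (-β), ← Finset.mul_sum]
  field_simp
  ring

end Diagonal

/-- The eigenvalue of `σ_z` on the basis vector `i`. -/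
def spin (i : Fin 2) : ℝ := if i = 0 then 1 else -1

def twoQubitEnergy (t : ℝ) (p : Fin 2 × Fin 2) : ℝ := spin p.1 * spin p.2 + t * spin p.2

theorem twoQubitH_eq_diagonal (t : ℝ) :
    twoQubitH t = diagonal fun p => (twoQubitEnergy t p : ℂ) := by
  ext ⟨i, j⟩ ⟨k, l⟩
  fin_cases i <;> fin_cases j <;> fin_cases k <;> fin_cases l <;>
    simp [twoQubitH, pauliZ, twoQubitEnergy, spin, kroneckerMap_apply, one_apply]

theorem sum_exp_neg_twoQubitEnergy (t : ℝ) :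
    ∑ p, Real.exp (-twoQubitEnergy t p) = 4 * Real.cosh 1 * Real.cosh t := by
  have : 4 * Real.cosh 1 * Real.cosh t = 2 * Real.cosh (1 + t) + 2 * Real.cosh (1 - t) := by
    rw [Real.cosh_add, Real.cosh_sub]; ring
  rw [this, Real.cosh_eq, Real.cosh_eq]
  simp [Fintype.sum_prod_type, twoQubitEnergy, spin]
  ring_nf

theorem sum_exp_neg_twoQubitEnergy_mul_spin (t : ℝ) :
    ∑ p, Real.exp (-twoQubitEnergy t p) * spin p.2 = -(4 * Real.cosh 1 * Real.sinh t) := by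
  have : -(4 * Real.cosh 1 * Real.sinh t) = 2 * Real.sinh (1 - t) - 2 * Real.sinh (1 + t) := by
    rw [Real.sinh_add, Real.sinh_sub]; ring
  rw [this, Real.sinh_eq, Real.sinh_eq]
  simp [Fintype.sum_prod_type, twoQubitEnergy, spin]
  ring_nf

theorem sum_gibbsWeights_twoQubitEnergy_mul_spin (t : ℝ) :
    ∑ p, gibbsWeights 1 (twoQubitEnergy t) p * spin p.2 = -Real.tanh t := by
  simp only [gibbsWeights, neg_mul, one_mul, div_mul_eq_mul_div, ← Finset.sum_div,
    sum_exp_neg_twoQubitEnergy, sum_exp_neg_twoQubitEnergy_mul_spin, Real.tanh_eq_sinh_div_cosh]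
  field_simp [(Real.cosh_pos 1).ne']

namespace Real

theorem hasDerivAt_mul_tanh_sub_log_cosh (x : ℝ) :
    HasDerivAt (fun y => y * tanh y - log (cosh y)) (x / cosh x ^ 2) x := by
  have hc : cosh x ≠ 0 := (cosh_pos x).ne'
  simp only [tanh_eq_sinh_div_cosh]
  refine (((hasDerivAt_id' x).fun_mul ((hasDerivAt_sinh x).fun_div (hasDerivAt_cosh x) hc)).fun_sub
    ((hasDerivAt_cosh x).log hc)).congr_deriv ?_
  field_simp
  linear_combination x * cosh_sq_sub_sinh_sq x

theorem mul_tanh_sub_log_cosh_pos {s : ℝ} (hs : s ≠ 0) : 0 < s * tanh s - log (cosh s) := by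
  set g : ℝ → ℝ := fun y => y * tanh y - log (cosh y) with hg
  have hg_mono : StrictMonoOn g (Set.Ici 0) := by
    refine strictMonoOn_of_deriv_pos (convex_Ici 0) ?_ fun x hx => ?_
    · exact fun x _ => (hasDerivAt_mul_tanh_sub_log_cosh x).continuousAt.continuousWithinAt
    · rw [interior_Ici] at hx
      rw [(hasDerivAt_mul_tanh_sub_log_cosh x).deriv]
      exact div_pos hx (pow_pos (cosh_pos x) 2)
  have hg_even : g s = g |s| := by
    rcases abs_choice s with h | h <;> rw [h]
    simp [hg, tanh_neg]
  have hg_zero : g 0 = 0 := by simp [hg]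
  show 0 < g s
  rw [hg_even, ← hg_zero]
  exact hg_mono Set.self_mem_Ici (abs_nonneg s) (abs_pos.mpr hs)

end Real

theorem two_qubit_work_gap_general (t : ℝ)
    (h1 : (gibbs 1 (twoQubitH t)).IsHermitian)
    (h2 : (gibbs 1 (twoQubitH 0)).IsHermitian) :
    freeEnergy 1 (gibbs 1 (twoQubitH t)) (twoQubitH 0) h1 -
        freeEnergy 1 (gibbs 1 (twoQubitH 0)) (twoQubitH 0) h2 =
      t * Real.tanh t - Real.log (Real.cosh t) ∧
    ∀ s : ℝ, s ≠ 0 → 0 < s * Real.tanh s - Real.log (Real.cosh s) := by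
  refine ⟨?_, fun s => Real.mul_tanh_sub_log_cosh_pos⟩
  have hwork : ∑ p, gibbsWeights 1 (twoQubitEnergy t) p *
      (twoQubitEnergy 0 p - twoQubitEnergy t p) = t * Real.tanh t := by
    have hdiff (p : Fin 2 × Fin 2) : twoQubitEnergy 0 p - twoQubitEnergy t p = -t * spin p.2 := by
      simp only [twoQubitEnergy]; ring
    simp only [hdiff, mul_left_comm _ (-t), ← Finset.mul_sum,
      sum_gibbsWeights_twoQubitEnergy_mul_spin]
    ring
  rw [freeEnergy_gibbs_of_eq_diagonal one_ne_zero h1 (twoQubitH_eq_diagonal t)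
      (twoQubitH_eq_diagonal 0),
    freeEnergy_gibbs_of_eq_diagonal one_ne_zero h2 (twoQubitH_eq_diagonal 0)
      (twoQubitH_eq_diagonal 0)]
  simp only [sub_self, mul_zero, Finset.sum_const_zero, neg_mul, one_mul, div_one, hwork,
    sum_exp_neg_twoQubitEnergy, Real.cosh_zero, mul_one]
  rw [Real.log_mul (by positivity) (Real.cosh_pos t).ne']
  ring

/-- Work gap in the local two-qubit example: for `0 < t ≤ t_c` and `β = 1`,
`ΔF(ω_t, σ_z⊗σ_z) = t tanh t - log cosh t`, and this quantity is strictly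
positive for all `t ≠ 0`. -/
theorem two_qubit_work_gap (t tc : ℝ) (ht0 : 0 < t) (htle : t ≤ tc)
    (htc : Real.tanh tc = (Real.exp 2 - 1) / (2 * Real.exp 2))
    (h1 : (gibbs 1 (twoQubitH t)).IsHermitian)
    (h2 : (gibbs 1 (twoQubitH 0)).IsHermitian) :
    freeEnergy 1 (gibbs 1 (twoQubitH t)) (twoQubitH 0) h1 -
        freeEnergy 1 (gibbs 1 (twoQubitH 0)) (twoQubitH 0) h2 =
      t * Real.tanh t - Real.log (Real.cosh t) ∧
    ∀ s : ℝ, s ≠ 0 → 0 < s * Real.tanh s - Real.log (Real.cosh s) :=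
  two_qubit_work_gap_general t h1 h2
end
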